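/- arXiv:1210.2983 — 3 statements merged into one kernel-verified Lean document; each statement's English description precedes it below -/
import Mathlib

section
/- Let l₁, ..., l₅ be five distinct (pairwise non-proportional) linear forms in k[x,y,z] such that no four of the corresponding lines in ℙ² pass through a common point. Then the five polynomials lᵢ(x,y,z)·lᵢ(x̃,ỹ,z̃), i = 1, ..., 5, are linearly independent over k. -/
open MvPolynomial

section Aux

variable {k : Type*} [Field k]

/-- cross product of two vectors in `k^3`. -/
def cp3 (u v : Fin 3 → k) : Fin 3 → k := fun j => u (j + 1) * v (j + 2) - u (j + 2) * v (j + 1)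

/-- dot product of two vectors in `k^3`. -/
def dot3 (u v : Fin 3 → k) : k := u 0 * v 0 + u 1 * v 1 + u 2 * v 2

lemma cp3_apply0 (u v : Fin 3 → k) : cp3 u v 0 = u 1 * v 2 - u 2 * v 1 := rfl
lemma cp3_apply1 (u v : Fin 3 → k) : cp3 u v 1 = u 2 * v 0 - u 0 * v 2 := rfl
lemma cp3_apply2 (u v : Fin 3 → k) : cp3 u v 2 = u 0 * v 1 - u 1 * v 0 := rfl

lemma sum3_eq_dot3 (u p : Fin 3 → k) : ∑ s, u s * p s = dot3 u p := by
  simp [dot3, Fin.sum_univ_three]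

lemma dot3_cp_left (u v : Fin 3 → k) : dot3 u (cp3 u v) = 0 := by
  simp only [dot3, cp3_apply0, cp3_apply1, cp3_apply2]; ring

lemma dot3_cp_right (u v : Fin 3 → k) : dot3 v (cp3 u v) = 0 := by
  simp only [dot3, cp3_apply0, cp3_apply1, cp3_apply2]; ring

lemma dot3_rotate (u v w : Fin 3 → k) : dot3 u (cp3 v w) = dot3 (cp3 u v) w := by
  simp only [dot3, cp3_apply0, cp3_apply1, cp3_apply2]; ring

lemma cp3_anticomm_apply (u v : Fin 3 → k) (j : Fin 3) : cp3 v u j = -(cp3 u v j) := by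
  simp only [cp3]; ring

lemma dot3_single (u : Fin 3 → k) (s : Fin 3) : dot3 u (Pi.single s 1) = u s := by
  fin_cases s <;> simp [dot3, Pi.single_apply]

/-- if the cross product vanishes and `u ≠ 0` then `v` is a multiple of `u`. -/
lemma cp3_eq_zero (u v : Fin 3 → k) (hu : u ≠ 0) (h : cp3 u v = 0) : ∃ t : k, v = t • u := by
  have h0 : u 1 * v 2 - u 2 * v 1 = 0 := by rw [← cp3_apply0 u v, h]; rfl
  have h1 : u 2 * v 0 - u 0 * v 2 = 0 := by rw [← cp3_apply1 u v, h]; rfl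
  have h2 : u 0 * v 1 - u 1 * v 0 = 0 := by rw [← cp3_apply2 u v, h]; rfl
  have hcase : u 0 ≠ 0 ∨ u 1 ≠ 0 ∨ u 2 ≠ 0 := by
    by_contra hcon
    push_neg at hcon
    obtain ⟨e0, e1, e2⟩ := hcon
    exact hu (funext fun j => by fin_cases j <;> simpa)
  have key : ∀ t : k, v 0 = t * u 0 → v 1 = t * u 1 → v 2 = t * u 2 → ∃ t : k, v = t • u := by
    intro t g0 g1 g2
    refine ⟨t, funext fun j => ?_⟩
    simp only [Pi.smul_apply, smul_eq_mul]
    fin_cases j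
    · exact g0
    · exact g1
    · exact g2
  rcases hcase with hs | hs | hs
  · refine key (v 0 / u 0) (by field_simp) ?_ ?_
    · field_simp
      first | linear_combination h2 | linear_combination -h2
    · field_simp
      first | linear_combination h1 | linear_combination -h1
  · refine key (v 1 / u 1) ?_ (by field_simp) ?_
    · field_simp
      first | linear_combination h2 | linear_combination -h2
    · field_simp
      first | linear_combination h0 | linear_combination -h0
  · refine key (v 2 / u 2) ?_ ?_ (by field_simp)
    · field_simp
      first | linear_combination h1 | linear_combination -h1
    · field_simp
      first | linear_combination h0 | linear_combination -h0

lemma cp3_perp (u v p : Fin 3 → k) (hp : dot3 u p = 0) (hq : dot3 v p = 0) :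
    cp3 (cp3 u v) p = 0 := by
  simp only [dot3] at hp hq
  have c0 : cp3 (cp3 u v) p 0 = 0 := by
    rw [cp3_apply0, cp3_apply1, cp3_apply2]
    linear_combination v 0 * hp - u 0 * hq
  have c1 : cp3 (cp3 u v) p 1 = 0 := by
    rw [cp3_apply1, cp3_apply2, cp3_apply0]
    linear_combination v 1 * hp - u 1 * hq
  have c2 : cp3 (cp3 u v) p 2 = 0 := by
    rw [cp3_apply2, cp3_apply0, cp3_apply1]
    linear_combination v 2 * hp - u 2 * hq
  funext j
  fin_cases j
  · exact c0
  · exact c1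
  · exact c2

lemma perp_exists (u v : Fin 3 → k) (hu : u ≠ 0) (hv : ∀ t : k, v ≠ t • u) :
    ∃ p : Fin 3 → k, p ≠ 0 ∧ dot3 u p = 0 ∧ dot3 v p = 0 := by
  refine ⟨cp3 u v, fun h => ?_, dot3_cp_left u v, dot3_cp_right u v⟩
  obtain ⟨t, ht⟩ := cp3_eq_zero u v hu h
  exact hv t ht

lemma perp_unique (u v p q : Fin 3 → k) (hu : u ≠ 0) (hv : ∀ t : k, v ≠ t • u)
    (hp : p ≠ 0) (hup : dot3 u p = 0) (hvp : dot3 v p = 0)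
    (huq : dot3 u q = 0) (hvq : dot3 v q = 0) : ∃ t : k, q = t • p := by
  have hc : cp3 u v ≠ 0 := fun h => by
    obtain ⟨t, ht⟩ := cp3_eq_zero u v hu h
    exact hv t ht
  obtain ⟨s, hsp⟩ := cp3_eq_zero (cp3 u v) p hc (cp3_perp u v p hup hvp)
  obtain ⟨t, htq⟩ := cp3_eq_zero (cp3 u v) q hc (cp3_perp u v q huq hvq)
  have hs : s ≠ 0 := by rintro rfl; simp at hsp; exact hp hsp
  refine ⟨t / s, funext fun j => ?_⟩
  have hj := congrFun hsp j
  have hj' := congrFun htq j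
  simp only [Pi.smul_apply, smul_eq_mul] at hj hj' ⊢
  field_simp
  linear_combination s * hj' - t * hj

lemma one_term {u : Fin 3 → k} (hu : u ≠ 0) {s : k} (hs : s ≠ 0)
    (h : ∀ j, s * u j = 0) : False := by
  apply hu
  funext j
  have := h j
  rcases mul_eq_zero.mp this with h' | h'
  · exact absurd h' hs
  · simpa using h'

lemma two_term {u v : Fin 3 → k} (hv : ∀ t : k, v ≠ t • u) {s t : k} (hs : s ≠ 0) (ht : t ≠ 0)
    (h : ∀ r, s * u r + t * v r = 0) : False := by
  apply hv (-s / t)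
  funext r
  simp only [Pi.smul_apply, smul_eq_mul]
  field_simp
  first | linear_combination h r | linear_combination -(h r) | linear_combination t * (h r) | linear_combination (-t) * (h r)

lemma four_contra (l : Fin 5 → Fin 3 → k)
    (hfour : ∀ g : Fin 4 → Fin 5, Function.Injective g →
      ¬ ∃ p : Fin 3 → k, p ≠ 0 ∧ ∀ i, ∑ s, l (g i) s * p s = 0)
    (i1 i2 i3 i4 : Fin 5) (h12 : i1 ≠ i2) (h13 : i1 ≠ i3) (h14 : i1 ≠ i4)
    (h23 : i2 ≠ i3) (h24 : i2 ≠ i4) (h34 : i3 ≠ i4)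
    (p : Fin 3 → k) (hp : p ≠ 0)
    (d1 : dot3 (l i1) p = 0) (d2 : dot3 (l i2) p = 0)
    (d3 : dot3 (l i3) p = 0) (d4 : dot3 (l i4) p = 0) : False := by
  refine hfour ![i1, i2, i3, i4] ?_ ⟨p, hp, ?_⟩
  · intro a b hab
    fin_cases a <;> fin_cases b <;> simp_all
  · intro i
    fin_cases i <;> simp only [Matrix.cons_val_zero, Matrix.cons_val_one, Matrix.head_cons,
      Matrix.cons_val_two, Matrix.tail_cons, Matrix.cons_val_three] <;>
      rw [sum3_eq_dot3] <;> assumption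

lemma stmt2_key (l : Fin 5 → Fin 3 → k) (c : Fin 5 → k)
    (hne : ∀ i, l i ≠ 0)
    (hdist : ∀ i j, i ≠ j → ∀ t : k, l j ≠ t • l i)
    (hfour : ∀ g : Fin 4 → Fin 5, Function.Injective g →
      ¬ ∃ p : Fin 3 → k, p ≠ 0 ∧ ∀ i, ∑ s, l (g i) s * p s = 0)
    (hM : ∀ u w : Fin 3 → k, ∑ i, c i * dot3 (l i) u * dot3 (l i) w = 0)
    (m a b x y : Fin 5)
    (hma : m ≠ a) (hmb : m ≠ b) (hmx : m ≠ x) (hmy : m ≠ y)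
    (hab : a ≠ b) (hax : a ≠ x) (hay : a ≠ y)
    (hbx : b ≠ x) (hby : b ≠ y) (hxy : x ≠ y)
    (hsum : ∀ f : Fin 5 → k, ∑ i, f i = f m + f a + f b + f x + f y)
    (q : Fin 3 → k) (hqa : dot3 (l a) q = 0) (hqb : dot3 (l b) q = 0)
    (hqm : dot3 (l m) q ≠ 0) (hcm : c m ≠ 0) : False := by
  have hvec : ∀ p : Fin 3 → k, ∀ j : Fin 3, ∑ i, c i * dot3 (l i) p * l i j = 0 := by
    intro p j
    have h := hM p (Pi.single j 1)
    simpa only [dot3_single] using h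
  -- the three-term relation coming from `q`
  have R1 : ∀ j, c m * dot3 (l m) q * l m j + c x * dot3 (l x) q * l x j
      + c y * dot3 (l y) q * l y j = 0 := by
    intro j
    have h := hvec q j
    rw [hsum (fun i => c i * dot3 (l i) q * l i j)] at h
    simp only [hqa, hqb, mul_zero, zero_mul, add_zero, zero_add] at h
    linear_combination h
  have hdotR1 : ∀ v : Fin 3 → k, c m * dot3 (l m) q * dot3 (l m) v
      + c x * dot3 (l x) q * dot3 (l x) v + c y * dot3 (l y) q * dot3 (l y) v = 0 := by
    intro v
    have e0 := R1 0
    have e1 := R1 1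
    have e2 := R1 2
    simp only [dot3] at e0 e1 e2 ⊢
    linear_combination v 0 * e0 + v 1 * e1 + v 2 * e2
  have hα : c m * dot3 (l m) q ≠ 0 := mul_ne_zero hcm hqm
  rcases eq_or_ne (c x * dot3 (l x) q) 0 with hβ | hβ
  · rcases eq_or_ne (c y * dot3 (l y) q) 0 with hγ | hγ
    · exact one_term (hne m) hα fun j => by linear_combination R1 j - l x j * hβ - l y j * hγ
    · exact two_term (hdist m y hmy) hα hγ fun r => by linear_combination R1 r - l x r * hβ
  · rcases eq_or_ne (c y * dot3 (l y) q) 0 with hγ | hγ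
    · exact two_term (hdist m x hmx) hα hβ fun r => by linear_combination R1 r - l y r * hγ
    · -- the triple m, x, y is "concurrent" with all coefficients nonzero
      have hcx : c x ≠ 0 := left_ne_zero_of_mul hβ
      have hcy : c y ≠ 0 := left_ne_zero_of_mul hγ
      obtain ⟨p, hpne, hpm, hpx⟩ := perp_exists (l m) (l x) (hne m) (hdist m x hmx)
      have hpy : dot3 (l y) p = 0 := by
        have h3 := hdotR1 p
        rw [hpm, hpx] at h3
        simp only [mul_zero, zero_add, add_zero] at h3
        exact (mul_eq_zero.mp h3).resolve_left hγ
      have hpa : dot3 (l a) p ≠ 0 := fun h =>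
        four_contra l hfour m x y a hmx hmy hma hxy hax.symm hay.symm p hpne hpm hpx hpy h
      have hpb : dot3 (l b) p ≠ 0 := fun h =>
        four_contra l hfour m x y b hmx hmy hmb hxy hbx.symm hby.symm p hpne hpm hpx hpy h
      have R2 : ∀ j, c a * dot3 (l a) p * l a j + c b * dot3 (l b) p * l b j = 0 := by
        intro j
        have h := hvec p j
        rw [hsum (fun i => c i * dot3 (l i) p * l i j)] at h
        rw [hpm, hpx, hpy] at h
        simp only [mul_zero, zero_mul, add_zero, zero_add] at h
        linear_combination h
      rcases eq_or_ne (c a) 0 with hca | hca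
      · rcases eq_or_ne (c b) 0 with hcb | hcb
        · -- Veronese case: only m, x, y have nonzero coefficients
          have hM3 : ∀ u w : Fin 3 → k, c m * dot3 (l m) u * dot3 (l m) w
              + c x * dot3 (l x) u * dot3 (l x) w + c y * dot3 (l y) u * dot3 (l y) w = 0 := by
            intro u w
            have h := hM u w
            rw [hsum (fun i => c i * dot3 (l i) u * dot3 (l i) w)] at h
            rw [hca, hcb] at h
            simp only [zero_mul, add_zero, zero_add] at h
            linear_combination h
          have hcp : cp3 (l x) (l y) ≠ 0 := fun h => by
            obtain ⟨t, ht⟩ := cp3_eq_zero (l x) (l y) (hne x) h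
            exact hdist x y hxy t ht
          obtain ⟨s, hs⟩ := Function.ne_iff.mp hcp
          simp only [Pi.zero_apply] at hs
          set u : Fin 3 → k := cp3 (l y) (Pi.single s 1) with hu_def
          set w : Fin 3 → k := cp3 (l x) (Pi.single s 1) with hw_def
          have hyu : dot3 (l y) u = 0 := dot3_cp_left _ _
          have hxw : dot3 (l x) w = 0 := dot3_cp_left _ _
          have hxu : dot3 (l x) u ≠ 0 := by
            rw [hu_def, dot3_rotate, dot3_single]
            exact hs
          have hyw : dot3 (l y) w ≠ 0 := by
            rw [hw_def, dot3_rotate, dot3_single, cp3_anticomm_apply]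
            exact neg_ne_zero.mpr hs
          have hmu : dot3 (l m) u ≠ 0 := by
            intro h
            have h4 := hdotR1 u
            rw [hyu, h] at h4
            simp only [mul_zero, add_zero, zero_add] at h4
            exact hxu ((mul_eq_zero.mp h4).resolve_left hβ)
          have hmw : dot3 (l m) w ≠ 0 := by
            intro h
            have h5 := hdotR1 w
            rw [hxw, h] at h5
            simp only [mul_zero, add_zero, zero_add] at h5
            exact hyw ((mul_eq_zero.mp h5).resolve_left hγ)
          have hfin := hM3 u w
          rw [hyu, hxw] at hfin
          simp only [mul_zero, zero_mul, add_zero] at hfin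
          exact hmw ((mul_eq_zero.mp hfin).resolve_left (mul_ne_zero hcm hmu))
        · exact one_term (hne b) (mul_ne_zero hcb hpb)
            fun j => by linear_combination R2 j - dot3 (l a) p * l a j * hca
      · rcases eq_or_ne (c b) 0 with hcb | hcb
        · exact one_term (hne a) (mul_ne_zero hca hpa)
            fun j => by linear_combination R2 j - dot3 (l b) p * l b j * hcb
        · exact two_term (hdist a b hab) (mul_ne_zero hca hpa) (mul_ne_zero hcb hpb) R2

end Aux

/-- For five pairwise non-proportional linear forms `lᵢ` in `k[x,y,z]` such that no
four of the corresponding lines in `ℙ²` pass through a common point, the five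
polynomials `lᵢ(x,y,z)·lᵢ(x̃,ỹ,z̃)` are linearly independent over `k`. -/
theorem stmt2 (k : Type*) [Field k] [Infinite k] (l : Fin 5 → Fin 3 → k)
    (hne : ∀ i, l i ≠ 0)
    (hdist : ∀ i j, i ≠ j → ∀ t : k, l j ≠ t • l i)
    (hfour : ∀ g : Fin 4 → Fin 5, Function.Injective g →
      ¬ ∃ p : Fin 3 → k, p ≠ 0 ∧ ∀ i, ∑ s, l (g i) s * p s = 0) :
    LinearIndependent k (fun i : Fin 5 =>
      ((C (l i 0) * X 0 + C (l i 1) * X 1 + C (l i 2) * X 2) *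
       (C (l i 0) * X 3 + C (l i 1) * X 4 + C (l i 2) * X 5) :
        MvPolynomial (Fin 6) k)) := by
  rw [Fintype.linearIndependent_iff]
  intro c hc m
  have hM : ∀ u w : Fin 3 → k, ∑ i, c i * dot3 (l i) u * dot3 (l i) w = 0 := by
    intro u w
    have h := congrArg (MvPolynomial.eval (![u 0, u 1, u 2, w 0, w 1, w 2] : Fin 6 → k)) hc
    simp only [map_sum, MvPolynomial.smul_eq_C_mul, map_mul, map_add, MvPolynomial.eval_C,
      MvPolynomial.eval_X, map_zero, Matrix.cons_val_zero, Matrix.cons_val_one, Matrix.head_cons,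
      Matrix.cons_val_two, Matrix.tail_cons, Matrix.cons_val_three, Matrix.cons_val_four] at h
    rw [show (![u 0, u 1, u 2, w 0, w 1, w 2] : Fin 6 → k) 5 = w 2 from rfl] at h
    rw [← h]
    refine Finset.sum_congr rfl fun i _ => ?_
    simp only [dot3]
    norm_num
    ring
  by_contra hcm
  set A : Fin 4 → Fin 5 := m.succAbove with hA
  have hAm : ∀ i, A i ≠ m := fun i => Fin.succAbove_ne m i
  have hAinj : ∀ i j : Fin 4, i ≠ j → A i ≠ A j := fun i j hij h =>
    hij (Fin.succAbove_right_injective h)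
  have hsum1 : ∀ f : Fin 5 → k, ∑ i, f i = f m + f (A 0) + f (A 1) + f (A 2) + f (A 3) := by
    intro f
    rw [Fin.sum_univ_succAbove f m, Fin.sum_univ_four]
    ring
  have hsum2 : ∀ f : Fin 5 → k, ∑ i, f i = f m + f (A 0) + f (A 2) + f (A 1) + f (A 3) := by
    intro f
    rw [Fin.sum_univ_succAbove f m, Fin.sum_univ_four]
    ring
  obtain ⟨q12, hq12ne, h120, h121⟩ :=
    perp_exists (l (A 0)) (l (A 1)) (hne (A 0)) (hdist (A 0) (A 1) (hAinj 0 1 (by decide)))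
  rcases eq_or_ne (dot3 (l m) q12) 0 with h1 | h1
  · obtain ⟨q13, hq13ne, h130, h132⟩ :=
      perp_exists (l (A 0)) (l (A 2)) (hne (A 0)) (hdist (A 0) (A 2) (hAinj 0 2 (by decide)))
    rcases eq_or_ne (dot3 (l m) q13) 0 with h2 | h2
    · obtain ⟨t, hts⟩ := perp_unique (l m) (l (A 0)) q12 q13 (hne m)
        (hdist m (A 0) (hAm 0).symm) hq12ne h1 h120 h2 h130
      have ht : t ≠ 0 := by
        rintro rfl
        simp only [zero_smul] at hts
        exact hq13ne hts
      have h122 : dot3 (l (A 2)) q12 = 0 := by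
        rw [hts] at h132
        have : t * dot3 (l (A 2)) q12 = 0 := by
          simp only [dot3, Pi.smul_apply, smul_eq_mul] at h132 ⊢
          linear_combination h132
        exact (mul_eq_zero.mp this).resolve_left ht
      exact four_contra l hfour m (A 0) (A 1) (A 2) (hAm 0).symm (hAm 1).symm (hAm 2).symm
        (hAinj 0 1 (by decide)) (hAinj 0 2 (by decide)) (hAinj 1 2 (by decide))
        q12 hq12ne h1 h120 h121 h122
    · exact stmt2_key l c hne hdist hfour hM m (A 0) (A 2) (A 1) (A 3)
        (hAm 0).symm (hAm 2).symm (hAm 1).symm (hAm 3).symm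
        (hAinj 0 2 (by decide)) (hAinj 0 1 (by decide)) (hAinj 0 3 (by decide))
        (hAinj 2 1 (by decide)) (hAinj 2 3 (by decide)) (hAinj 1 3 (by decide))
        hsum2 q13 h130 h132 h2 hcm
  · exact stmt2_key l c hne hdist hfour hM m (A 0) (A 1) (A 2) (A 3)
      (hAm 0).symm (hAm 1).symm (hAm 2).symm (hAm 3).symm
      (hAinj 0 1 (by decide)) (hAinj 0 2 (by decide)) (hAinj 0 3 (by decide))
      (hAinj 1 2 (by decide)) (hAinj 1 3 (by decide)) (hAinj 2 3 (by decide))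
      hsum1 q12 h120 h121 h1 hcm
end

section
/- Let D₁, ..., D_m (m ≥ 2) be effective divisors on a normal projective variety X of dimension n ≥ 2, written as nonnegative integer combinations of prime divisors, such that each prime divisor appears in at most m - n + 1 of the divisors D₁, ..., D_m (i.e., for each prime F, #{i : ord_F(Dᵢ) > 0} ≤ m - n + 1). Then Σ_{i≠j} lcm(Dᵢ, D_j) ≥ (m + n - 2) · Σ_{l=1}^m D_l, where the sum on the left is over all ordered pairs (i,j) with i ≠ j, lcm is taken coefficient-wise as max, and ≥ is coefficient-wise. -/
/-- Divisors are encoded as coefficient functions `D i : P → ℕ` on prime divisors.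
If each prime divisor appears in (has positive coefficient in) at most `m - n + 1`
of the effective divisors `D₁, …, D_m`, then coefficient-wise
`Σ_{i≠j} lcm(Dᵢ, D_j) ≥ (m + n - 2) · Σ_l D_l`, where `lcm` is the
coefficient-wise maximum and the left sum is over ordered pairs `(i,j)`, `i ≠ j`. -/
theorem stmt4 (P : Type*) (m n : ℕ) (hm : 2 ≤ m) (hn : 2 ≤ n) (hnm : n ≤ m)
    (D : Fin m → P → ℕ)
    (hpos : ∀ F : P, (Finset.univ.filter fun i => 0 < D i F).card ≤ m - n + 1) :
    ∀ F : P, (m + n - 2) * ∑ i, D i F ≤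
      ∑ i, ∑ j, if i ≠ j then max (D i F) (D j F) else 0 := by
  intro F
  set a : Fin m → ℕ := fun i => D i F with ha
  set S := ∑ i, a i with hS
  -- number of zeros is at least n - 1
  have hZ : n - 1 ≤ (Finset.univ.filter fun i => a i = 0).card := by
    have h1 := hpos F
    have h2 := Finset.card_filter_add_card_filter_not
      (s := (Finset.univ : Finset (Fin m))) (p := fun i => a i = 0)
    have h3 : (Finset.univ.filter fun i => ¬ a i = 0).card
        = (Finset.univ.filter fun i => 0 < D i F).card := by
      congr 1
      apply Finset.filter_congr
      intro i _
      simp [ha, Nat.pos_iff_ne_zero]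
    rw [h3] at h2
    simp only [Finset.card_univ, Fintype.card_fin] at h2
    omega
  -- pointwise bound
  have key : ∀ i j : Fin m,
      (if i ≠ j then a i else 0) + (if i ≠ j ∧ a i = 0 then a j else 0)
        ≤ (if i ≠ j then max (a i) (a j) else 0) := by
    intro i j
    by_cases h : i = j
    · simp [h]
    · by_cases h0 : a i = 0
      · simp [h, h0]
      · simp [h, h0, le_max_left]
  -- inner sum of first part
  have inner1 : ∀ i : Fin m, ∑ j : Fin m, (if i ≠ j then a i else 0) = (m - 1) * a i := by
    intro i
    have e1 : ∑ j : Fin m, (if i = j then a i else 0) = a i := by simp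
    have e2 : (∑ j : Fin m, (if i ≠ j then a i else 0)) + a i = m * a i := by
      have hpt : ∀ j : Fin m, (if i ≠ j then a i else 0) + (if i = j then a i else 0) = a i := by
        intro j; by_cases h : i = j <;> simp [h]
      have hsum : ∑ j : Fin m, ((if i ≠ j then a i else 0) + (if i = j then a i else 0))
          = m * a i := by
        rw [Finset.sum_congr rfl (fun j _ => hpt j)]
        simp [mul_comm]
      rw [Finset.sum_add_distrib, e1] at hsum
      exact hsum
    have h4 : (m - 1) * a i + a i = m * a i := by
      have hm1 : m - 1 + 1 = m := by omega
      calc (m - 1) * a i + a i = (m - 1 + 1) * a i := by ring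
        _ = m * a i := by rw [hm1]
    omega
  have sum1 : ∑ i : Fin m, ∑ j : Fin m, (if i ≠ j then a i else 0) = (m - 1) * S := by
    simp only [inner1, ← Finset.mul_sum, hS]
  -- inner sum of second part
  have inner2 : ∀ i : Fin m, a i = 0 →
      ∑ j : Fin m, (if i ≠ j ∧ a i = 0 then a j else 0) = S := by
    intro i h0
    rw [hS]
    apply Finset.sum_congr rfl
    intro j _
    by_cases h : i = j
    · subst h; simp [h0]
    · simp [h, h0]
  have inner2' : ∀ i : Fin m, ¬ a i = 0 →
      ∑ j : Fin m, (if i ≠ j ∧ a i = 0 then a j else 0) = 0 := by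
    intro i h0
    apply Finset.sum_eq_zero
    intro j _
    simp [h0]
  have sum2 : ∑ i : Fin m, ∑ j : Fin m, (if i ≠ j ∧ a i = 0 then a j else 0)
      = (Finset.univ.filter fun i => a i = 0).card * S := by
    rw [← Finset.sum_filter_add_sum_filter_not Finset.univ (fun i => a i = 0)]
    rw [Finset.sum_congr rfl (fun i hi => inner2 i (Finset.mem_filter.mp hi).2),
        Finset.sum_congr rfl (fun i hi => inner2' i (Finset.mem_filter.mp hi).2)]
    simp [mul_comm]
  -- combine
  have big : (m - 1) * S + (Finset.univ.filter fun i => a i = 0).card * S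
      ≤ ∑ i : Fin m, ∑ j : Fin m, (if i ≠ j then max (a i) (a j) else 0) := by
    rw [← sum1, ← sum2, ← Finset.sum_add_distrib]
    apply Finset.sum_le_sum
    intro i _
    rw [← Finset.sum_add_distrib]
    exact Finset.sum_le_sum fun j _ => key i j
  calc (m + n - 2) * S ≤ (m - 1) * S + (Finset.univ.filter fun i => a i = 0).card * S := by
        rw [← Nat.add_mul]
        apply Nat.mul_le_mul_right
        omega
    _ ≤ _ := big
end

section
/- Let a₁, ..., a_m be nonnegative integers (m ≥ 2, n ≥ 2, m ≥ n) such that at most m - n + 1 of them are positive. Then Σ_{(i,j): i ≠ j} max(aᵢ, a_j) ≥ (m + n - 2) · Σ_{i=1}^m aᵢ. -/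
/-- If `a₁, …, a_m` are nonnegative integers (`m ≥ n ≥ 2`) with at most `m - n + 1`
of them positive, then `Σ_{(i,j): i≠j} max(aᵢ, a_j) ≥ (m + n - 2) · Σᵢ aᵢ`,
the left sum running over ordered pairs. -/
theorem stmt5 (m n : ℕ) (hm : 2 ≤ m) (hn : 2 ≤ n) (hnm : n ≤ m)
    (a : Fin m → ℕ)
    (hpos : (Finset.univ.filter fun i => 0 < a i).card ≤ m - n + 1) :
    (m + n - 2) * ∑ i, a i ≤ ∑ i, ∑ j, if i ≠ j then max (a i) (a j) else 0 := by
  classical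
  set S := ∑ i, a i with hS
  set Z := Finset.univ.filter (fun j => a j = 0) with hZ
  have hcardsum : (Finset.univ.filter fun i => 0 < a i).card + Z.card = m := by
    have h := Finset.card_filter_add_card_filter_not
      (s := (Finset.univ : Finset (Fin m))) (p := fun i => 0 < a i)
    have : Finset.univ.filter (fun i => ¬ 0 < a i) = Z := by
      apply Finset.filter_congr
      intro x _
      simp [Nat.pos_iff_ne_zero]
    simpa [this, Fintype.card_fin] using h
  have hcard : n - 1 ≤ Z.card := by omega
  have key : ∀ i : Fin m, (n - 1) * a i + ∑ j ∈ Finset.univ.erase i, a j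
      ≤ ∑ j ∈ Finset.univ.erase i, max (a i) (a j) := by
    intro i
    by_cases hi : a i = 0
    · simp only [hi, Nat.mul_zero, Nat.zero_add, Nat.max_comm]
      exact Finset.sum_le_sum fun j _ => le_max_left _ _
    · have hZsub : Z ⊆ Finset.univ.erase i := by
        intro j hj
        simp only [hZ, Finset.mem_filter, Finset.mem_univ, true_and] at hj
        simp only [Finset.mem_erase, Finset.mem_univ, and_true]
        intro hji; exact hi (hji ▸ hj)
      calc (n - 1) * a i + ∑ j ∈ Finset.univ.erase i, a j
          ≤ Z.card * a i + ∑ j ∈ Finset.univ.erase i, a j := by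
            exact Nat.add_le_add_right (Nat.mul_le_mul_right _ hcard) _
        _ = ∑ j ∈ Finset.univ.erase i, ((if j ∈ Z then a i else 0) + a j) := by
            rw [Finset.sum_add_distrib, Finset.sum_ite_mem,
              Finset.inter_eq_right.mpr hZsub, Finset.sum_const, smul_eq_mul]
        _ ≤ ∑ j ∈ Finset.univ.erase i, max (a i) (a j) := by
            refine Finset.sum_le_sum fun j hj => ?_
            by_cases hjZ : j ∈ Z
            · have : a j = 0 := by
                simpa [hZ] using hjZ
              simp [hjZ, this]
            · simp [hjZ]
  have H : ∑ i, ∑ j, (if i ≠ j then max (a i) (a j) else 0)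
      = ∑ i, ∑ j ∈ Finset.univ.erase i, max (a i) (a j) := by
    refine Finset.sum_congr rfl fun i _ => ?_
    rw [← Finset.sum_filter, Finset.filter_ne]
  rw [H]
  have hT : (∑ i, ∑ j ∈ Finset.univ.erase i, a j) + S = m * S := by
    have : ∀ i : Fin m, (∑ j ∈ Finset.univ.erase i, a j) + a i = S :=
      fun i => Finset.sum_erase_add _ _ (Finset.mem_univ i)
    calc (∑ i, ∑ j ∈ Finset.univ.erase i, a j) + ∑ i, a i
        = ∑ i : Fin m, ((∑ j ∈ Finset.univ.erase i, a j) + a i) :=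
          (Finset.sum_add_distrib).symm
      _ = ∑ i : Fin m, S := Finset.sum_congr rfl fun i _ => this i
      _ = m * S := by simp [Finset.sum_const, mul_comm]
  calc (m + n - 2) * S = (n - 1) * S + (m - 1) * S := by
        rw [← add_mul]; congr 1; omega
    _ = (n - 1) * S + (∑ i, ∑ j ∈ Finset.univ.erase i, a j) := by
        congr 1
        have : (m - 1) * S = m * S - S := by
          rw [Nat.sub_one_mul]
        omega
    _ = ∑ i : Fin m, ((n - 1) * a i + ∑ j ∈ Finset.univ.erase i, a j) := by
        rw [Finset.sum_add_distrib, ← Finset.mul_sum]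
    _ ≤ ∑ i, ∑ j ∈ Finset.univ.erase i, max (a i) (a j) :=
        Finset.sum_le_sum fun i _ => key i
end
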